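/- arXiv:1507.08021 — 7 statements merged into one kernel-verified Lean document; each statement's English description precedes it below -/
import Mathlib

section
/- Let S = {x ∈ ℓ¹ : x_0 = 0 and ∑_{k=1}^∞ x_k = 0}. Then the pre-annihilator of S in c₀ is ^⊥S = {ν ∈ c₀ : ν_k = 0 for all k ≥ 1} (i.e., sequences supported on the zeroth coordinate). -/
/-!
Testing against `e_{m+1} - e_{m+2} ∈ S` gives `ν (m+1) = ν (m+2)` for every `m`, so `ν` is constant
from index `1` on; since `ν` tends to `0`, that constant is `0`. Conversely a `ν` supported on the
zeroth coordinate pairs with `x` to `ν 0 * x 0 = 0`.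
-/

open Filter Topology

lemma hasSum_mul_single_sub_single {ι R : Type*} [DecidableEq ι] [Ring R] [TopologicalSpace R]
    [IsTopologicalAddGroup R] (f : ι → R) (i j : ι) :
    HasSum (fun k => f k * (Pi.single i 1 - Pi.single j 1 : ι → R) k) (f i - f j) := by
  simpa only [Pi.sub_apply, mul_sub, ← Pi.single_mul_right_apply, mul_one] using
    (hasSum_pi_single i (f i)).sub (hasSum_pi_single j (f j))

lemma eq_of_succ_eq_of_tendsto {X : Type*} [TopologicalSpace X] [T1Space X] {u : ℕ → X} {a : X}
    (hsucc : ∀ n, u (n + 1) = u n) (hu : Tendsto u atTop (𝓝 a)) (n : ℕ) : u n = a := by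
  have hconst : u = fun _ => u 0 := funext fun n => by
    induction n with
    | zero => rfl
    | succ n ih => rw [hsucc, ih]
  rw [hconst] at hu ⊢
  exact tendsto_const_nhds_iff.mp hu

lemma hasSum_single_sub_single_comp_succ {R : Type*} [Ring R] [TopologicalSpace R]
    [IsTopologicalAddGroup R] (m : ℕ) :
    HasSum (fun k => (Pi.single (m + 1) 1 - Pi.single (m + 2) 1 : ℕ → R) (k + 1)) 0 := by
  have hsum := hasSum_mul_single_sub_single (fun _ => (1 : R)) (m + 1) (m + 2)
  simp only [one_mul, sub_self] at hsum
  simpa using (hasSum_nat_add_iff' 1).mpr hsum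

/-- For `S = {x ∈ ℓ¹ : x_0 = 0, ∑_{k≥1} x_k = 0}`, the pre-annihilator of `S` in
c₀ consists exactly of the null sequences supported on the zeroth coordinate. -/
theorem preannihilator_of_tail_sum_zero_subspace
    (ν : lp (fun _ : ℕ => ℝ) ⊤)
    (hν₀ : Filter.Tendsto (fun k => ν k) Filter.atTop (nhds 0)) :
    (∀ x ∈ {x : lp (fun _ : ℕ => ℝ) 1 | x 0 = 0 ∧ ∑' k : ℕ, x (k + 1) = 0},
        ∑' k : ℕ, ν k * x k = 0)
      ↔ ∀ k : ℕ, 1 ≤ k → ν k = 0 := by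
  constructor
  · intro hS
    have hstep (m : ℕ) : ν (m + 1 + 1) = ν (m + 1) := by
      let x : lp (fun _ : ℕ => ℝ) 1 := lp.single 1 (m + 1) 1 - lp.single 1 (m + 2) 1
      have hx : ⇑x = Pi.single (m + 1) 1 - Pi.single (m + 2) 1 := rfl
      have hpair := hS x ⟨by simp [hx], by rw [hx, (hasSum_single_sub_single_comp_succ m).tsum_eq]⟩
      rw [hx, (hasSum_mul_single_sub_single (ν ·) (m + 1) (m + 2)).tsum_eq] at hpair
      exact (sub_eq_zero.mp hpair).symm
    intro k hk
    obtain ⟨n, rfl⟩ := Nat.exists_eq_add_of_le' hk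
    exact eq_of_succ_eq_of_tendsto (u := fun n => ν (n + 1)) hstep
      (hν₀.comp (tendsto_add_atTop_nat 1)) n
  · rintro hν x ⟨hx₀, -⟩
    refine (tsum_congr fun k => ?_).trans tsum_zero
    rcases k with _ | k
    · rw [hx₀, mul_zero]
    · rw [hν (k + 1) k.succ_pos, zero_mul]
end

section
/- Let S = {x ∈ ℓ¹ : x_0 = 0 and ∑_{k=1}^∞ x_k = 0}, and let y = (1,1,0,0,…) ∈ ℓ¹. Then inf_{x ∈ S} ‖y − x‖₁ = 2, attained at x = 0, while sup{⟨ν,y⟩ : ν ∈ ^⊥S, ‖ν‖_∞ ≤ 1} = 1. In particular the predual duality formula fails even though ^⊥S ≠ {0}. -/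
/-!
Every `x ∈ S` has `∑_{k ≥ 2} x_k = -x_1`, so `‖y - x‖₁ ≥ 1 + |1 - x_1| + |x_1| ≥ 2`, with equality
at `x = 0`. On the other side, the differences `e_{i+1} - e_i` lie in `S`, so an annihilating
`ν ∈ c₀` is constant on the indices `k ≥ 1`, hence zero there; thus `⟨ν, y⟩ = ν_0 ≤ ‖ν‖_∞`, with
equality for `ν = e_0`.
-/

open Filter Topology
open scoped ENNReal

theorem lp.norm_eq_tsum_norm_of_one {α : Type*} {E : α → Type*} [∀ i, NormedAddCommGroup (E i)]
    (f : lp E 1) : ‖f‖ = ∑' i, ‖f i‖ := by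
  simpa using lp.norm_eq_tsum_rpow (by simp) f

theorem lp.summable_norm_of_one {α : Type*} {E : α → Type*} [∀ i, NormedAddCommGroup (E i)]
    (f : lp E 1) : Summable fun i => ‖f i‖ := by
  simpa using (lp.memℓp f).summable (by simp)

theorem sum_range_norm_add_norm_tsum_nat_add_le {E : Type*} [NormedAddCommGroup E] {f : ℕ → E}
    (hf : Summable fun k => ‖f k‖) (n : ℕ) :
    ∑ k ∈ Finset.range n, ‖f k‖ + ‖∑' k, f (k + n)‖ ≤ ∑' k, ‖f k‖ := by
  rw [← hf.sum_add_tsum_nat_add n]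
  gcongr
  exact norm_tsum_le_tsum_norm ((summable_nat_add_iff n).2 hf)

theorem hasSum_mul_pi_single {ι R : Type*} [DecidableEq ι] [NonUnitalNonAssocSemiring R]
    [TopologicalSpace R] (ν : ι → R) (i : ι) (a : R) :
    HasSum (fun k => ν k * (Pi.single i a : ι → R) k) (ν i * a) := by
  convert hasSum_pi_single i (ν i * a) using 1
  ext k
  rcases eq_or_ne k i with rfl | hk <;> simp [*]

theorem lp.tsum_mul_single_add_single {ι R : Type*} [DecidableEq ι] [NormedRing R] {p : ℝ≥0∞}
    (ν : ι → R) (i j : ι) (a b : R) :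
    ∑' k, ν k * (lp.single p i a + lp.single p j b : lp (fun _ : ι => R) p) k =
      ν i * a + ν j * b := by
  simpa only [lp.coeFn_add, Pi.add_apply, lp.single_apply, mul_add] using
    ((hasSum_mul_pi_single ν i a).add (hasSum_mul_pi_single ν j b)).tsum_eq

theorem apply_eq_of_tendsto_of_succ_eq {X : Type*} [TopologicalSpace X] [T2Space X] {u : ℕ → X}
    {a : X} (hsucc : ∀ n, u (n + 1) = u n) (hu : Tendsto u atTop (𝓝 a)) (n : ℕ) : u n = a := by
  have hconst : u = fun _ => u 0 := funext fun n => Nat.rec rfl (fun n ih => (hsucc n).trans ih) n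
  rw [hconst] at hu
  exact (congrFun hconst n).trans (tendsto_const_nhds_iff.1 hu)

noncomputable section

namespace TailSumZero

local notation "ℓ¹" => lp (fun _ : ℕ => ℝ) 1

def tailSumZero : Set ℓ¹ := {x | x 0 = 0 ∧ ∑' k : ℕ, x (k + 1) = 0}

def y : ℓ¹ := lp.single 1 0 1 + lp.single 1 1 1

@[simp] theorem y_zero : y 0 = 1 := by simp [y]
@[simp] theorem y_one : y 1 = 1 := by simp [y]
@[simp] theorem y_add_two (k : ℕ) : y (k + 2) = 0 := by simp [y]

theorem zero_mem_tailSumZero : (0 : ℓ¹) ∈ tailSumZero := by simp [tailSumZero]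

theorem single_add_single_neg_mem_tailSumZero (i j : ℕ) (a : ℝ) :
    lp.single 1 (i + 1) a + lp.single 1 (j + 1) (-a) ∈ tailSumZero := by
  refine ⟨by simp, ?_⟩
  have hshift (m k : ℕ) (b : ℝ) :
      (Pi.single (m + 1) b : ℕ → ℝ) (k + 1) = (Pi.single m b : ℕ → ℝ) k := by
    simp [Pi.single_apply]
  simpa only [lp.coeFn_add, Pi.add_apply, lp.single_apply, hshift, add_neg_cancel] using
    ((hasSum_pi_single i a).add (hasSum_pi_single j (-a))).tsum_eq

theorem two_le_norm_y_sub {x : ℓ¹} (hx : x ∈ tailSumZero) : 2 ≤ ‖y - x‖ := by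
  obtain ⟨hx0, hxsum⟩ := hx
  have htail : ∑' k, x (k + 2) = - x 1 := by
    have := ((summable_nat_add_iff 1).2 (lp.memℓp x).summable_of_one).tsum_eq_zero_add
    linarith
  have key := sum_range_norm_add_norm_tsum_nat_add_le (lp.summable_norm_of_one (y - x)) 2
  rw [← lp.norm_eq_tsum_norm_of_one] at key
  simp only [Finset.sum_range_succ, Finset.sum_range_zero, lp.coeFn_sub, Pi.sub_apply, y_zero,
    y_one, y_add_two, hx0, zero_sub, sub_zero, zero_add, tsum_neg, htail, neg_neg, norm_one] at key
  have htri : (1 : ℝ) ≤ ‖1 - x 1‖ + ‖x 1‖ := by simpa using norm_add_le (1 - x 1) (x 1)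
  linarith

theorem norm_y : ‖y‖ = 2 := by
  have h := two_le_norm_y_sub zero_mem_tailSumZero
  rw [sub_zero] at h
  refine le_antisymm ?_ h
  calc ‖y‖ ≤ ‖(lp.single 1 0 1 : ℓ¹)‖ + ‖(lp.single 1 1 1 : ℓ¹)‖ := norm_add_le _ _
    _ = 2 := by rw [lp.norm_single one_pos, lp.norm_single one_pos]; norm_num

theorem infDist_y_tailSumZero : Metric.infDist y tailSumZero = 2 := by
  refine le_antisymm ?_ ((Metric.le_infDist ⟨0, zero_mem_tailSumZero⟩).2 fun x hx => ?_)
  · simpa [norm_y] using Metric.infDist_le_dist_of_mem (x := y) zero_mem_tailSumZero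
  · simpa [dist_eq_norm] using two_le_norm_y_sub hx

theorem apply_succ_eq_zero_of_annihilates {ν : lp (fun _ : ℕ => ℝ) ∞}
    (hν : Tendsto (fun k => ν k) atTop (𝓝 0))
    (hann : ∀ x ∈ tailSumZero, ∑' k, ν k * x k = 0) (n : ℕ) : ν (n + 1) = 0 := by
  refine apply_eq_of_tendsto_of_succ_eq (fun n => ?_) (hν.comp (tendsto_add_atTop_nat 1)) n
  have hpair := hann _ (single_add_single_neg_mem_tailSumZero (n + 1) n 1)
  rw [lp.tsum_mul_single_add_single] at hpair
  simp only [Function.comp_apply]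
  linarith

theorem isGreatest_pairing_y :
    IsGreatest {r : ℝ | ∃ ν : lp (fun _ : ℕ => ℝ) ∞, Tendsto (fun k => ν k) atTop (𝓝 0)
      ∧ (∀ x ∈ tailSumZero, ∑' k, ν k * x k = 0) ∧ ‖ν‖ ≤ 1 ∧ r = ∑' k, ν k * y k} 1 := by
  refine ⟨⟨lp.single ∞ 0 1, ?_, fun x hx => ?_, ?_, ?_⟩, ?_⟩
  · exact tendsto_const_nhds.congr' ((eventually_ne_atTop 0).mono fun k hk => by simp [hk])
  · simp [Pi.single_apply, hx.1]
  · simp [lp.norm_single]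
  · simp [Pi.single_apply]
  · rintro r ⟨ν, hν, hann, hnorm, rfl⟩
    rw [y, lp.tsum_mul_single_add_single, apply_succ_eq_zero_of_annihilates hν hann 0, mul_one,
      zero_mul, add_zero]
    exact (le_abs_self _).trans ((lp.norm_apply_le_norm ENNReal.top_ne_zero ν 0).trans hnorm)

end TailSumZero

end

/-- For `S = {x ∈ ℓ¹ : x_0 = 0, ∑_{k≥1} x_k = 0}` and `y = (1,1,0,0,…)`:
the distance from `y` to `S` is 2, attained at `x = 0 ∈ S`, while the supremum
of `⟨ν,y⟩` over the unit ball of the pre-annihilator of `S` in c₀ equals 1.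
Thus the predual duality formula fails even though the pre-annihilator is nontrivial. -/
theorem duality_fails_for_tail_sum_zero_subspace :
    Metric.infDist
        ((lp.single 1 0 (1:ℝ) + lp.single 1 1 (1:ℝ)) : lp (fun _ : ℕ => ℝ) 1)
        {x : lp (fun _ : ℕ => ℝ) 1 | x 0 = 0 ∧ ∑' k : ℕ, x (k + 1) = 0} = 2
      ∧ (0 : lp (fun _ : ℕ => ℝ) 1)
          ∈ {x : lp (fun _ : ℕ => ℝ) 1 | x 0 = 0 ∧ ∑' k : ℕ, x (k + 1) = 0}
      ∧ ‖((lp.single 1 0 (1:ℝ) + lp.single 1 1 (1:ℝ)) : lp (fun _ : ℕ => ℝ) 1) - 0‖ = 2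
      ∧ sSup {r : ℝ | ∃ ν : lp (fun _ : ℕ => ℝ) ⊤,
            Filter.Tendsto (fun k => ν k) Filter.atTop (nhds 0)
            ∧ (∀ x ∈ {x : lp (fun _ : ℕ => ℝ) 1 | x 0 = 0 ∧ ∑' k : ℕ, x (k + 1) = 0},
                ∑' k : ℕ, ν k * x k = 0)
            ∧ ‖ν‖ ≤ 1
            ∧ r = ∑' k : ℕ,
                ν k * ((lp.single 1 0 (1:ℝ) + lp.single 1 1 (1:ℝ)) : lp (fun _ : ℕ => ℝ) 1) k}
          = 1 :=
  ⟨TailSumZero.infDist_y_tailSumZero, TailSumZero.zero_mem_tailSumZero,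
    (congrArg norm (sub_zero _)).trans TailSumZero.norm_y,
    TailSumZero.isGreatest_pairing_y.csSup_eq⟩
end

section
/- Let X be a real normed space identified as the dual of a normed space ^*X, let S ⊆ X be a subspace, and let y ∈ X. Then inf_{x∈S} ‖y−x‖ ≥ min_{x ∈ (^⊥S)^⊥} ‖y−x‖ = sup{⟨ν,y⟩ : ν ∈ ^⊥S, ‖ν‖ ≤ 1}, where the middle minimum is attained. -/
set_option maxHeartbeats 1000000 in
set_option synthInstance.maxHeartbeats 400000 in
private lemma minDist_aux (V : Type*) [NormedAddCommGroup V] [NormedSpace ℝ V]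
    (K : Submodule ℝ V) (y : V →L[ℝ] ℝ) :
    ∃ x₀ : V →L[ℝ] ℝ,
      (∀ ν ∈ K, x₀ ν = 0)
      ∧ ‖y - x₀‖ = sSup {r : ℝ | ∃ ν ∈ (K : Set V), ‖ν‖ ≤ 1 ∧ r = y ν}
      ∧ (∀ x : V →L[ℝ] ℝ, (∀ ν ∈ K, x ν = 0) → ‖y - x₀‖ ≤ ‖y - x‖) := by
  set f : K →L[ℝ] ℝ := y.comp K.subtypeL with hf
  obtain ⟨g, hg, hgnorm⟩ := exists_extension_norm_eq K f
  set T : Set ℝ := {r : ℝ | ∃ ν ∈ (K : Set V), ‖ν‖ ≤ 1 ∧ r = y ν} with hT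
  have hfval : ∀ ν : K, f ν = y (ν : V) := fun ν => rfl
  have hnormcoe : ∀ ν : K, ‖ν‖ = ‖(ν : V)‖ := fun ν => rfl
  have hzeroT : (0 : ℝ) ∈ T := ⟨0, K.zero_mem, by simp⟩
  have hub : ∀ r ∈ T, r ≤ ‖f‖ := by
    rintro r ⟨ν, hν, hν1, rfl⟩
    have h1 : y ν = f ⟨ν, hν⟩ := (hfval ⟨ν, hν⟩).symm
    rw [h1]
    calc f ⟨ν, hν⟩ ≤ |f ⟨ν, hν⟩| := le_abs_self _
      _ ≤ ‖f‖ * ‖(⟨ν, hν⟩ : K)‖ := f.le_opNorm _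
      _ ≤ ‖f‖ * 1 := mul_le_mul_of_nonneg_left (by rw [hnormcoe]; exact hν1) (ContinuousLinearMap.opNorm_nonneg f)
      _ = ‖f‖ := mul_one _
  have hbdd : BddAbove T := ⟨‖f‖, hub⟩
  have hsup : ‖f‖ = sSup T := by
    apply le_antisymm
    · refine ContinuousLinearMap.opNorm_le_bound' f (le_csSup hbdd hzeroT) ?_
      intro ν hν0
      have hc0 : 0 < ‖ν‖ := lt_of_le_of_ne (norm_nonneg _) (Ne.symm hν0)
      set c : ℝ := ‖ν‖⁻¹ with hc
      have hcpos : 0 < c := inv_pos.mpr hc0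
      have hmem : ∀ (w : K), ‖w‖ ≤ 1 → f w ≤ sSup T := by
        intro w hw
        refine le_csSup hbdd ⟨(w : V), w.2, by rw [← hnormcoe]; exact hw, (hfval w).symm⟩
      have hnorm1 : ‖c • ν‖ = 1 := by
        rw [norm_smul, Real.norm_eq_abs, abs_of_pos hcpos, hc, inv_mul_cancel₀ hν0]
      have h1 := hmem (c • ν) (le_of_eq hnorm1)
      have h2 := hmem (-(c • ν)) (by rw [norm_neg]; exact le_of_eq hnorm1)
      rw [map_neg] at h2
      have habs : |f (c • ν)| ≤ sSup T := abs_le.mpr ⟨by linarith, h1⟩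
      rw [map_smul, smul_eq_mul, abs_mul, abs_of_pos hcpos] at habs
      have hfn : ‖f ν‖ = |f ν| := rfl
      rw [hfn]
      calc |f ν| = ‖ν‖ * (c * |f ν|) := by
            rw [← mul_assoc, hc, mul_inv_cancel₀ hν0, one_mul]
        _ ≤ ‖ν‖ * sSup T := mul_le_mul_of_nonneg_left habs (norm_nonneg _)
        _ = sSup T * ‖ν‖ := mul_comm _ _
    · exact csSup_le ⟨0, hzeroT⟩ hub
  have hlow : ∀ x : V →L[ℝ] ℝ, (∀ ν ∈ K, x ν = 0) → ‖f‖ ≤ ‖y - x‖ := by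
    intro x hx
    refine ContinuousLinearMap.opNorm_le_bound f (norm_nonneg _) ?_
    intro ν
    have h1 : f ν = (y - x) (ν : V) := by
      rw [hfval, ContinuousLinearMap.sub_apply, hx (ν : V) ν.2, sub_zero]
    rw [h1, hnormcoe]
    exact (y - x).le_opNorm _
  have hnormsub : ‖y - (y - g)‖ = ‖f‖ := by rw [sub_sub_cancel, hgnorm]
  refine ⟨y - g, ?_, ?_, ?_⟩
  · intro ν hν
    rw [ContinuousLinearMap.sub_apply, hg ⟨ν, hν⟩, hfval, sub_self]
  · rw [hnormsub, hsup]
  · intro x hx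
    rw [hnormsub]; exact hlow x hx

/-- For `X` the dual of `V = ^*X`, a subspace `S ⊆ X`, and `y ∈ X`:
`inf_{x∈S} ‖y−x‖ ≥ min_{x ∈ (^⊥S)^⊥} ‖y−x‖ = sup {⟨ν,y⟩ : ν ∈ ^⊥S, ‖ν‖ ≤ 1}`,
the middle minimum being attained. -/
theorem minDist_over_ann_of_preann (V : Type*) [NormedAddCommGroup V] [NormedSpace ℝ V]
    (S : Submodule ℝ (V →L[ℝ] ℝ)) (y : V →L[ℝ] ℝ) :
    ∃ x₀ : V →L[ℝ] ℝ,
      (∀ ν ∈ {ν : V | ∀ s ∈ S, s ν = 0}, x₀ ν = 0)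
      ∧ ‖y - x₀‖ = sSup {r : ℝ | ∃ ν ∈ {ν : V | ∀ s ∈ S, s ν = 0}, ‖ν‖ ≤ 1 ∧ r = y ν}
      ∧ (∀ x : V →L[ℝ] ℝ, (∀ ν ∈ {ν : V | ∀ s ∈ S, s ν = 0}, x ν = 0) →
          ‖y - x₀‖ ≤ ‖y - x‖)
      ∧ (∀ x ∈ S, ‖y - x₀‖ ≤ ‖y - x‖) := by
  let K : Submodule ℝ V :=
    { carrier := {ν : V | ∀ s ∈ S, s ν = 0}
      add_mem' := fun {a b} ha hb s hs => by simp [map_add, ha s hs, hb s hs]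
      zero_mem' := fun s hs => by simp
      smul_mem' := fun c a ha s hs => by simp [ha s hs] }
  have hKset : {ν : V | ∀ s ∈ S, s ν = 0} = (K : Set V) := rfl
  obtain ⟨x₀, h1, h2, h3⟩ := minDist_aux V K y
  refine ⟨x₀, h1, by rw [hKset]; exact h2, h3, ?_⟩
  intro x hxS
  exact h3 x (fun ν hν => hν x hxS)
end

section
/- Let X be a real normed space identified as the dual of a normed space ^*X, and let S ⊆ X be a subspace satisfying (^⊥S)^⊥ = S. Then for every y ∈ X: min_{x∈S} ‖y−x‖ = sup{⟨ν,y⟩ : ν ∈ ^⊥S, ‖ν‖ ≤ 1}, and the minimum is attained. -/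
/-! Let `N = ^⊥S`. Every `x ∈ S` vanishes on `N`, so `‖y - x‖` is at least the norm of the
restriction `y|N`, which is the supremum in question. By Hahn–Banach, `y|N` extends to some `g`
with `‖g‖ = ‖y|N‖`; then `y - g` vanishes on `N`, hence lies in `(^⊥S)^⊥ = S`, and attains the
bound. -/

open Metric

namespace StrongDual

variable {E : Type*} [NormedAddCommGroup E] [NormedSpace ℝ E]

theorem sSup_image_closedBall_eq_norm (f : StrongDual ℝ E) :
    sSup (f '' closedBall 0 1) = ‖f‖ := by
  refine csSup_eq_of_forall_le_of_forall_lt_exists_gt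
    ((nonempty_closedBall.mpr zero_le_one).image _) ?_ fun r hr => ?_
  · rintro - ⟨x, hx, rfl⟩
    calc f x ≤ |f x| := le_abs_self _
      _ ≤ ‖f‖ := f.unit_le_opNorm x (mem_closedBall_zero_iff.mp hx)
  · obtain ⟨x, hx, hrx⟩ := f.exists_lt_apply_of_lt_opNorm hr
    rcases le_total 0 (f x) with hfx | hfx
    · exact ⟨f x, ⟨x, mem_closedBall_zero_iff.mpr hx.le, rfl⟩, by
        rwa [Real.norm_of_nonneg hfx] at hrx⟩
    · refine ⟨f (-x), ⟨-x, mem_closedBall_zero_iff.mpr (by rw [norm_neg]; exact hx.le), rfl⟩, ?_⟩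
      rwa [map_neg, ← Real.norm_of_nonpos hfx]

theorem sSup_apply_submodule_eq_norm_comp_subtypeL (y : StrongDual ℝ E) (N : Submodule ℝ E) :
    sSup {r : ℝ | ∃ ν ∈ N, ‖ν‖ ≤ 1 ∧ r = y ν} = ‖y.comp N.subtypeL‖ := by
  rw [← sSup_image_closedBall_eq_norm]
  congr 1
  ext r
  simp only [Set.mem_ofPred_eq, Set.mem_image, mem_closedBall_zero_iff, Subtype.exists,
    ContinuousLinearMap.comp_apply, Submodule.subtypeL_apply, Submodule.coe_norm, exists_prop]
  exact exists_congr fun _ => and_congr_right' (and_congr_right' eq_comm)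

theorem norm_comp_subtypeL_le_norm_sub (y x : StrongDual ℝ E) {N : Submodule ℝ E}
    (hx : ∀ ν ∈ N, x ν = 0) : ‖y.comp N.subtypeL‖ ≤ ‖y - x‖ := by
  have hrestrict : y.comp N.subtypeL = (y - x).comp N.subtypeL := by
    ext ν
    simp [hx ν ν.2]
  calc ‖y.comp N.subtypeL‖ = ‖(y - x).comp N.subtypeL‖ := by rw [hrestrict]
    _ ≤ ‖y - x‖ * ‖N.subtypeL‖ := ContinuousLinearMap.opNorm_comp_le _ _
    _ ≤ ‖y - x‖ := mul_le_of_le_one_right (norm_nonneg _) (Submodule.norm_subtypeL_le N)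

theorem exists_norm_sub_eq_norm_comp_subtypeL (y : StrongDual ℝ E) (N : Submodule ℝ E) :
    ∃ x₀ : StrongDual ℝ E, (∀ ν ∈ N, x₀ ν = 0) ∧ ‖y - x₀‖ = ‖y.comp N.subtypeL‖ := by
  obtain ⟨g, hg, hgnorm⟩ := exists_extension_norm_eq N (y.comp N.subtypeL)
  refine ⟨y - g, fun ν hν => ?_, by rw [sub_sub_cancel, hgnorm]⟩
  simp [hg ⟨ν, hν⟩]

end StrongDual

open StrongDual in
/-- For `X` the dual of `V = ^*X` and a subspace `S ⊆ X` with `(^⊥S)^⊥ = S`, the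
predual duality formula holds for every `y`: `min_{x∈S} ‖y−x‖ = sup {⟨ν,y⟩ :
ν ∈ ^⊥S, ‖ν‖ ≤ 1}`, the minimum being attained. -/
theorem predual_duality_of_ann_preann_eq (V : Type*) [NormedAddCommGroup V] [NormedSpace ℝ V]
    (S : Submodule ℝ (V →L[ℝ] ℝ))
    (hS : {x : V →L[ℝ] ℝ | ∀ ν ∈ {ν : V | ∀ s ∈ S, s ν = 0}, x ν = 0}
            = (S : Set (V →L[ℝ] ℝ)))
    (y : V →L[ℝ] ℝ) :
    ∃ x₀ ∈ S,
      ‖y - x₀‖ = sSup {r : ℝ | ∃ ν ∈ {ν : V | ∀ s ∈ S, s ν = 0}, ‖ν‖ ≤ 1 ∧ r = y ν}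
      ∧ ∀ x ∈ S, ‖y - x₀‖ ≤ ‖y - x‖ := by
  set N := (topDualPairing ℝ V).polarSubmodule S
  have hN : (N : Set V) = {ν : V | ∀ s ∈ S, s ν = 0} :=
    (topDualPairing ℝ V).polar_subMulAction S
  obtain ⟨x₀, hx₀N, hx₀⟩ := exists_norm_sub_eq_norm_comp_subtypeL y N
  have hx₀S : x₀ ∈ S := by
    rw [← SetLike.mem_coe, ← hS, ← hN]
    exact hx₀N
  refine ⟨x₀, hx₀S, ?_, fun x hx => ?_⟩
  · rw [← hN, hx₀]
    exact (sSup_apply_submodule_eq_norm_comp_subtypeL y N).symm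
  · rw [hx₀]
    refine norm_comp_subtypeL_le_norm_sub y x fun ν hν => ?_
    rw [← SetLike.mem_coe, hN] at hν
    exact hν x hx
end

section
/- Let X be a real normed space identified as the dual of a normed space ^*X, and let S ⊆ X be a closed subspace. Then the identity min_{x∈S} ‖y−x‖ = sup{⟨ν,y⟩ : ν ∈ ^⊥S, ‖ν‖ ≤ 1} holds for all y ∈ X if and only if (^⊥S)^⊥ = S. -/
set_option synthInstance.maxHeartbeats 1000000 in
set_option maxHeartbeats 1000000 in
/-- Auxiliary: for a submodule `N` and functional `y`, there is `g` agreeing with `y`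
on `N` whose norm is the sup of `y` over the unit ball of `N` (Hahn–Banach). -/
theorem aux_hahn_banach_sup {V : Type*} [NormedAddCommGroup V] [NormedSpace ℝ V]
    (N : Submodule ℝ V) (y : V →L[ℝ] ℝ) :
    ∃ g : V →L[ℝ] ℝ, (∀ ν ∈ N, g ν = y ν) ∧
      ‖g‖ = sSup {r : ℝ | ∃ ν ∈ (N : Set V), ‖ν‖ ≤ 1 ∧ r = y ν} := by
  set f : N →L[ℝ] ℝ := y.comp N.subtypeL with hf
  obtain ⟨g, hg, hnorm⟩ := exists_extension_norm_eq N f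
  set Q : Set ℝ := {r : ℝ | ∃ ν ∈ (N : Set V), ‖ν‖ ≤ 1 ∧ r = y ν} with hQ
  have hQbdd : BddAbove Q := by
    refine ⟨‖y‖, ?_⟩
    rintro r ⟨ν, hν, hn1, rfl⟩
    calc y ν ≤ ‖y ν‖ := le_abs_self _
      _ ≤ ‖y‖ * ‖ν‖ := y.le_opNorm ν
      _ ≤ ‖y‖ := mul_le_of_le_one_right (norm_nonneg _) hn1
  have hQ0 : (0 : ℝ) ∈ Q := ⟨0, N.zero_mem, by simp, (map_zero y).symm⟩
  have hQnn : 0 ≤ sSup Q := le_csSup hQbdd hQ0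
  refine ⟨g, fun ν hν => hg ⟨ν, hν⟩, ?_⟩
  rw [hnorm]
  refine le_antisymm ?_ ?_
  · refine f.opNorm_le_bound hQnn ?_
    rintro ⟨x, hxN⟩
    by_cases hx0 : x = 0
    · subst hx0
      have : f ⟨0, hxN⟩ = y 0 := rfl
      simp [this]
    · have hxn : (0 : ℝ) < ‖x‖ := norm_pos_iff.mpr hx0
      have key : ∀ ν : V, ν ∈ N → ‖ν‖ ≤ 1 → y ν ≤ sSup Q :=
        fun ν hν h1 => le_csSup hQbdd ⟨ν, hν, h1, rfl⟩
      have h1 : y (‖x‖⁻¹ • x) ≤ sSup Q := by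
        refine key _ (N.smul_mem _ hxN) ?_
        rw [norm_smul, norm_inv, norm_norm, inv_mul_cancel₀ hxn.ne']
      have h2 : y (‖x‖⁻¹ • -x) ≤ sSup Q := by
        refine key _ (N.smul_mem _ (N.neg_mem hxN)) ?_
        rw [norm_smul, norm_inv, norm_norm, norm_neg, inv_mul_cancel₀ hxn.ne']
      rw [map_smul, smul_eq_mul] at h1
      rw [map_smul, map_neg, smul_eq_mul] at h2
      have hfx : f ⟨x, hxN⟩ = y x := rfl
      have e1 : y x ≤ ‖x‖ * sSup Q := (inv_mul_le_iff₀ hxn).mp h1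
      have e2 : -(y x) ≤ ‖x‖ * sSup Q := (inv_mul_le_iff₀ hxn).mp h2
      have hn : ‖(⟨x, hxN⟩ : N)‖ = ‖x‖ := rfl
      rw [hfx, hn, Real.norm_eq_abs, abs_le]
      constructor
      · linarith
      · linarith
  · refine Real.sSup_le ?_ f.opNorm_nonneg
    rintro r ⟨ν, hν, hn1, rfl⟩
    have hy : y ν = f ⟨ν, hν⟩ := rfl
    have hn : ‖(⟨ν, hν⟩ : N)‖ = ‖ν‖ := rfl
    calc y ν ≤ ‖f ⟨ν, hν⟩‖ := hy ▸ le_abs_self _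
      _ ≤ ‖f‖ * ‖(⟨ν, hν⟩ : N)‖ := f.le_opNorm _
      _ ≤ ‖f‖ := by rw [hn]; exact mul_le_of_le_one_right f.opNorm_nonneg hn1

/-- For `X` the dual of `V = ^*X` and a closed subspace `S ⊆ X`, the predual
duality formula `min_{x∈S} ‖y−x‖ = sup {⟨ν,y⟩ : ν ∈ ^⊥S, ‖ν‖ ≤ 1}` (with the
minimum attained) holds for all `y ∈ X` if and only if `(^⊥S)^⊥ = S`. -/
theorem predual_duality_iff_ann_preann_eq (V : Type*) [NormedAddCommGroup V] [NormedSpace ℝ V]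
    (S : Submodule ℝ (V →L[ℝ] ℝ)) (hS : IsClosed (S : Set (V →L[ℝ] ℝ))) :
    (∀ y : V →L[ℝ] ℝ, ∃ x₀ ∈ S,
        ‖y - x₀‖ = sSup {r : ℝ | ∃ ν ∈ {ν : V | ∀ s ∈ S, s ν = 0}, ‖ν‖ ≤ 1 ∧ r = y ν}
        ∧ ∀ x ∈ S, ‖y - x₀‖ ≤ ‖y - x‖)
      ↔ {x : V →L[ℝ] ℝ | ∀ ν ∈ {ν : V | ∀ s ∈ S, s ν = 0}, x ν = 0}
          = (S : Set (V →L[ℝ] ℝ)) := by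
  constructor
  · intro h
    apply Set.Subset.antisymm
    · intro y hy
      obtain ⟨x₀, hx₀S, heq, _⟩ := h y
      have hset : {r : ℝ | ∃ ν ∈ {ν : V | ∀ s ∈ S, s ν = 0}, ‖ν‖ ≤ 1 ∧ r = y ν}
          = {(0 : ℝ)} := by
        ext r
        constructor
        · rintro ⟨ν, hν, -, rfl⟩
          exact hy ν hν
        · rintro rfl
          exact ⟨0, fun s _ => map_zero s, by simp, (map_zero y).symm⟩
      rw [hset, csSup_singleton, norm_eq_zero, sub_eq_zero] at heq
      rw [heq]
      exact hx₀S
    · intro x hx ν hν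
      exact hν x hx
  · intro h y
    let N : Submodule ℝ V :=
      { carrier := {ν : V | ∀ s ∈ S, s ν = 0}
        add_mem' := fun {a b} ha hb s hs => by simp [ha s hs, hb s hs]
        zero_mem' := fun s _ => map_zero s
        smul_mem' := fun c ν hν s hs => by simp [hν s hs] }
    obtain ⟨g, hg, hnorm⟩ := aux_hahn_banach_sup N y
    have hcoe : (N : Set V) = {ν : V | ∀ s ∈ S, s ν = 0} := rfl
    rw [hcoe] at hnorm
    have hQle : ∀ x ∈ S, sSup {r : ℝ | ∃ ν ∈ {ν : V | ∀ s ∈ S, s ν = 0}, ‖ν‖ ≤ 1 ∧ r = y ν}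
        ≤ ‖y - x‖ := by
      intro x hx
      refine Real.sSup_le ?_ (norm_nonneg _)
      rintro r ⟨ν, hν, hn1, rfl⟩
      have hxν : x ν = 0 := hν x hx
      calc y ν = (y - x) ν := by simp [hxν]
        _ ≤ ‖(y - x) ν‖ := le_abs_self _
        _ ≤ ‖y - x‖ * ‖ν‖ := (y - x).le_opNorm ν
        _ ≤ ‖y - x‖ := mul_le_of_le_one_right (norm_nonneg _) hn1
    refine ⟨y - g, ?_, ?_, ?_⟩
    · have hmem : y - g ∈ (S : Set (V →L[ℝ] ℝ)) := by
        rw [← h]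
        intro ν hν
        have : g ν = y ν := hg ν hν
        simp [this]
      exact hmem
    · rw [sub_sub_cancel, hnorm]
    · intro x hx
      rw [sub_sub_cancel, hnorm]
      exact hQle x hx
end

section
/- Let S = {x ∈ ℓ¹ : ∑_{k=0}^∞ x_k = 0}. Then (^⊥S)^⊥ = ℓ¹, i.e., the annihilator (in ℓ¹) of the pre-annihilator of S (in c₀) is the whole space, even though S is a proper closed subspace of ℓ¹. In particular S ⊊ (^⊥S)^⊥. -/
/-!
A functional `ν` annihilating `S` takes the same value at `i` and `j`, since it kills
`e_i - e_j ∈ S`; so `ν` is constant, and a constant sequence in `c₀` is zero. Hence the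
pre-annihilator of `S` is `{0}` and its annihilator is all of `ℓ¹`, which is strictly larger
than `S` because `e_0 ∉ S`.
-/

open Filter Topology

lemma tsum_lp_single {ι : Type*} [DecidableEq ι] (p : ENNReal) (i : ι) (a : ℝ) :
    ∑' k, lp.single p i a k = a := by
  rw [lp.coeFn_single, tsum_pi_single]

lemma apply_eq_apply_of_forall_tsum_eq_zero {ι : Type*} (ν : ι → ℝ)
    (hann : ∀ s ∈ {s : lp (fun _ : ι => ℝ) 1 | ∑' k, s k = 0}, ∑' k, ν k * s k = 0)
    (i j : ι) : ν i = ν j := by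
  classical
  set s : lp (fun _ : ι => ℝ) 1 := lp.single 1 i 1 - lp.single 1 j 1
  have hs : ⇑s = Pi.single i 1 - Pi.single j 1 := by
    simp only [s, lp.coeFn_sub, lp.coeFn_single]
  have hsum : HasSum s 0 := by
    rw [hs, ← sub_self (1 : ℝ)]
    exact (hasSum_pi_single i 1).sub (hasSum_pi_single j 1)
  have hpair : HasSum (fun k => ν k * s k) (ν i - ν j) := by
    have hterm : (fun k => ν k * s k) = fun k => Pi.single i (ν i) k - Pi.single j (ν j) k := by
      funext k
      rw [hs, Pi.sub_apply, mul_sub, ← Pi.single_mul_right_apply, ← Pi.single_mul_right_apply,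
        mul_one, mul_one]
    exact hterm ▸ (hasSum_pi_single i (ν i)).sub (hasSum_pi_single j (ν j))
  exact sub_eq_zero.mp (hpair.tsum_eq ▸ hann s hsum.tsum_eq)

lemma eq_zero_of_tendsto_zero_of_forall_tsum_eq_zero {ι : Type*} [Nonempty ι]
    [SemilatticeSup ι] (ν : ι → ℝ) (h0 : Tendsto ν atTop (𝓝 0))
    (hann : ∀ s ∈ {s : lp (fun _ : ι => ℝ) 1 | ∑' k, s k = 0}, ∑' k, ν k * s k = 0)
    (k : ι) : ν k = 0 := by
  have hconst : ν = fun _ => ν k :=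
    funext fun j => apply_eq_apply_of_forall_tsum_eq_zero ν hann j k
  rw [hconst] at h0
  exact tendsto_const_nhds_iff.mp h0

/-- For `S = {x ∈ ℓ¹ : ∑ x_k = 0}`, the annihilator (in ℓ¹) of the
pre-annihilator of `S` (in c₀, under `⟨ν,x⟩ = ∑ ν_k x_k`) is all of ℓ¹;
in particular `S` is strictly contained in it. -/
theorem ann_of_preann_of_sum_zero_subspace_eq_univ :
    {x : lp (fun _ : ℕ => ℝ) 1 |
        ∀ ν : lp (fun _ : ℕ => ℝ) ⊤,
          Filter.Tendsto (fun k => ν k) Filter.atTop (nhds 0) →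
          (∀ s ∈ {s : lp (fun _ : ℕ => ℝ) 1 | ∑' k : ℕ, s k = 0}, ∑' k : ℕ, ν k * s k = 0) →
          ∑' k : ℕ, ν k * x k = 0}
      = Set.univ
    ∧ {x : lp (fun _ : ℕ => ℝ) 1 | ∑' k : ℕ, x k = 0}
        ⊂ {x : lp (fun _ : ℕ => ℝ) 1 |
            ∀ ν : lp (fun _ : ℕ => ℝ) ⊤,
              Filter.Tendsto (fun k => ν k) Filter.atTop (nhds 0) →
              (∀ s ∈ {s : lp (fun _ : ℕ => ℝ) 1 | ∑' k : ℕ, s k = 0},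
                ∑' k : ℕ, ν k * s k = 0) →
              ∑' k : ℕ, ν k * x k = 0} := by
  refine (and_iff_left_of_imp fun huniv =>
      huniv ▸ Set.ssubset_univ_iff.mpr fun h => ?strict).mpr
    (Set.eq_univ_of_forall fun x ν h0 hann => ?univ)
  case univ => simp [eq_zero_of_tendsto_zero_of_forall_tsum_eq_zero ν h0 hann]
  case strict =>
    have he₀ : lp.single 1 0 (1 : ℝ) ∈ {x : lp (fun _ : ℕ => ℝ) 1 | ∑' k : ℕ, x k = 0} :=
      h ▸ Set.mem_univ _
    exact one_ne_zero ((tsum_lp_single 1 0 (1 : ℝ)).symm.trans he₀)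
end

section
/- Let S = {x ∈ ℓ¹ : x_0 = 0, ∑_{k=1}^∞ x_k = 0}. Then (^⊥S)^⊥ = {x ∈ ℓ¹ : x_0 = 0}, which strictly contains S. Moreover dist(y, S) = 2 > 1 = dist(y, (^⊥S)^⊥) for y = (1,1,0,0,…), illustrating the strict inequality inf_{x∈S}‖y−x‖ > min_{x∈(^⊥S)^⊥}‖y−x‖. -/
/-!
Testing `ν ∈ c₀` against `e_{n+2} - e_{n+1} ∈ S` shows that a functional annihilating `S` is
constant on the indices `k ≥ 1`, hence zero there since `ν_k → 0`; so `^⊥S` is spanned by `e_0`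
and `(^⊥S)^⊥ = {x | x_0 = 0}`. For the distances, the total-sum functional has norm `1`,
vanishes on `S` and equals `2` at `y`, while the `0`-th coordinate has norm `1` and equals `1`
at `y`; the bounds are attained at `0 ∈ S` and at `e_1`.
-/

open Filter Topology
open scoped lp

theorem Metric.infDist_eq_of_mem_of_forall_le {X : Type*} [PseudoMetricSpace X] {y z : X}
    {s : Set X} {r : ℝ} (hz : z ∈ s) (hzr : dist y z ≤ r) (h : ∀ x ∈ s, r ≤ dist y x) :
    Metric.infDist y s = r :=
  le_antisymm ((Metric.infDist_le_dist_of_mem hz).trans hzr) ((Metric.le_infDist ⟨z, hz⟩).2 h)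

theorem eq_of_tendsto_of_succ_eq {X : Type*} [TopologicalSpace X] [T2Space X] {u : ℕ → X}
    {a : X} (hu : Tendsto u atTop (𝓝 a)) (h : ∀ n, u (n + 1) = u n) (n : ℕ) : u n = a := by
  have hconst : ∀ n, u n = u 0 := fun n => Nat.rec rfl (fun n ih => (h n).trans ih) n
  rw [hconst, tendsto_nhds_unique tendsto_const_nhds (hu.congr hconst)]

namespace lp

theorem tsum_single {α E : Type*} [DecidableEq α] [NormedAddCommGroup E] (p : ENNReal) (i : α)
    (a : E) : ∑' k, lp.single (E := fun _ : α => E) p i a k = a := by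
  rw [lp.coeFn_single]
  exact tsum_pi_single i a

theorem hasSum_mul_single {α R : Type*} [DecidableEq α] [NormedRing R] (p : ENNReal)
    (f : α → R) (i : α) (c : R) :
    HasSum (fun k => f k * lp.single (E := fun _ : α => R) p i c k) (f i * c) := by
  convert hasSum_pi_single i (f i * c) using 1
  ext k
  rcases eq_or_ne k i with rfl | hk
  · simp
  · simp [hk]

theorem hasSum_single_mul {α R : Type*} [DecidableEq α] [NormedRing R] (p : ENNReal)
    (f : α → R) (i : α) (c : R) :
    HasSum (fun k => lp.single (E := fun _ : α => R) p i c k * f k) (c * f i) := by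
  convert hasSum_pi_single i (c * f i) using 1
  ext k
  rcases eq_or_ne k i with rfl | hk
  · simp
  · simp [hk]

theorem tsum_succ_eq_tsum_of_apply_zero {E : Type*} [NormedAddCommGroup E] [CompleteSpace E]
    (x : ℓ¹(ℕ, E)) (hx : x 0 = 0) : ∑' k, x (k + 1) = ∑' k, x k := by
  rw [(Memℓp.summable_of_one x.2).tsum_eq_zero_add, hx, zero_add]

end lp

def tailSumZero : Set ℓ¹(ℕ, ℝ) := {x | x 0 = 0 ∧ ∑' k : ℕ, x (k + 1) = 0}

theorem mem_tailSumZero_iff {x : ℓ¹(ℕ, ℝ)} : x ∈ tailSumZero ↔ x 0 = 0 ∧ ∑' k, x k = 0 := by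
  refine and_congr_right fun hx => ?_
  rw [lp.tsum_succ_eq_tsum_of_apply_zero x hx]

theorem single_sub_single_mem_tailSumZero {i j : ℕ} (hi : i ≠ 0) (hj : j ≠ 0) (c : ℝ) :
    lp.single 1 i c - lp.single 1 j c ∈ tailSumZero := by
  refine mem_tailSumZero_iff.2 ⟨by simp [hi.symm, hj.symm], ?_⟩
  have := map_sub (lp.tsumCLM ℝ ℕ ℝ) (lp.single 1 i c) (lp.single 1 j c)
  simpa [lp.tsum_single] using this

theorem single_notMem_tailSumZero (i : ℕ) {c : ℝ} (hc : c ≠ 0) :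
    lp.single 1 i c ∉ tailSumZero := by
  simp [mem_tailSumZero_iff, hc]

theorem tailSumZero_ssubset : tailSumZero ⊂ {x : ℓ¹(ℕ, ℝ) | x 0 = 0} :=
  (Set.ssubset_iff_of_subset fun _ hx => hx.1).2
    ⟨lp.single 1 1 1, by simp, single_notMem_tailSumZero 1 one_ne_zero⟩

theorem apply_succ_eq_zero_of_annihilates_tailSumZero (ν : lp (fun _ : ℕ => ℝ) ⊤)
    (htend : Tendsto (fun k => ν k) atTop (𝓝 0))
    (hann : ∀ s ∈ tailSumZero, ∑' k, ν k * s k = 0) (k : ℕ) : ν (k + 1) = 0 := by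
  refine eq_of_tendsto_of_succ_eq (htend.comp (tendsto_add_atTop_nat 1)) (fun n => ?_) k
  have hsum : HasSum (fun k => ν k * (lp.single 1 (n + 2) 1 - lp.single 1 (n + 1) 1 : ℓ¹(ℕ, ℝ)) k)
      (ν (n + 2) * 1 - ν (n + 1) * 1) := by
    simpa only [lp.coeFn_sub, Pi.sub_apply, mul_sub] using
      (lp.hasSum_mul_single 1 (fun k => ν k) (n + 2) (1 : ℝ)).sub
        (lp.hasSum_mul_single 1 (fun k => ν k) (n + 1) (1 : ℝ))
  have h := hann _ (single_sub_single_mem_tailSumZero (n + 1).succ_ne_zero n.succ_ne_zero 1)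
  rw [hsum.tsum_eq, mul_one, mul_one, sub_eq_zero] at h
  exact h

theorem annihilator_preannihilator_tailSumZero :
    {x : ℓ¹(ℕ, ℝ) | ∀ ν : lp (fun _ : ℕ => ℝ) ⊤, Tendsto (fun k => ν k) atTop (𝓝 0) →
      (∀ s ∈ tailSumZero, ∑' k, ν k * s k = 0) → ∑' k, ν k * x k = 0} = {x | x 0 = 0} := by
  ext x
  constructor
  · intro hx
    have htend : Tendsto (fun k => lp.single ⊤ 0 (1 : ℝ) k) atTop (𝓝 0) :=
      tendsto_const_nhds.congr' <| (eventually_ne_atTop 0).mono fun k hk =>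
        (lp.single_apply_ne (E := fun _ : ℕ => ℝ) ⊤ 0 1 hk).symm
    have h := hx _ htend fun s hs => by
      rw [(lp.hasSum_single_mul ⊤ _ 0 1).tsum_eq, one_mul]
      exact hs.1
    rwa [(lp.hasSum_single_mul ⊤ _ 0 1).tsum_eq, one_mul] at h
  · intro (hx : x 0 = 0) ν htend hann
    have hν := apply_succ_eq_zero_of_annihilates_tailSumZero ν htend hann
    have hterms : (fun k => ν k * x k) = 0 := funext fun k => by
      cases k <;> simp [hx, hν]
    rw [hterms, Pi.zero_def, tsum_zero]

theorem infDist_tailSumZero_eq_two :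
    Metric.infDist (lp.single 1 0 1 + lp.single 1 1 1) tailSumZero = 2 := by
  refine Metric.infDist_eq_of_mem_of_forall_le (z := 0) (by simp [tailSumZero]) ?_ fun x hx => ?_
  · rw [dist_zero_right]
    refine (norm_add_le _ _).trans ?_
    rw [lp.norm_single one_pos, lp.norm_single one_pos, norm_one]
    norm_num
  · calc (2 : ℝ) = ‖lp.tsumCLM ℝ ℕ ℝ (lp.single 1 0 1 + lp.single 1 1 1 - x)‖ := by
          simp only [map_sub, map_add, lp.tsumCLM_apply, lp.tsum_single,
            (mem_tailSumZero_iff.1 hx).2]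
          norm_num
      _ ≤ _ := lp.norm_tsum_le _
      _ = _ := (dist_eq_norm _ _).symm

theorem infDist_setOf_apply_zero_eq_one :
    Metric.infDist (lp.single 1 0 1 + lp.single 1 1 1) {x : ℓ¹(ℕ, ℝ) | x 0 = 0} = 1 := by
  refine Metric.infDist_eq_of_mem_of_forall_le (z := lp.single 1 1 1) (by simp) ?_
    fun x hx => ?_
  · rw [dist_eq_norm, add_sub_cancel_right, lp.norm_single one_pos, norm_one]
  · calc (1 : ℝ) = ‖(lp.single 1 0 1 + lp.single 1 1 1 - x : ℓ¹(ℕ, ℝ)) 0‖ := by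
          simp [hx.out]
      _ ≤ _ := lp.norm_apply_le_norm one_ne_zero _ _
      _ = _ := (dist_eq_norm _ _).symm

/-- For `S = {x ∈ ℓ¹ : x_0 = 0, ∑_{k≥1} x_k = 0}`, the annihilator of the
pre-annihilator of `S` is `{x ∈ ℓ¹ : x_0 = 0}`, which strictly contains `S`;
and with `y = (1,1,0,0,…)` we have `dist(y,S) = 2 > 1 = dist(y,(^⊥S)^⊥)`. -/
theorem ann_of_preann_of_tail_sum_zero_subspace :
    {x : lp (fun _ : ℕ => ℝ) 1 |
        ∀ ν : lp (fun _ : ℕ => ℝ) ⊤,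
          Filter.Tendsto (fun k => ν k) Filter.atTop (nhds 0) →
          (∀ s ∈ {s : lp (fun _ : ℕ => ℝ) 1 | s 0 = 0 ∧ ∑' k : ℕ, s (k + 1) = 0},
            ∑' k : ℕ, ν k * s k = 0) →
          ∑' k : ℕ, ν k * x k = 0}
      = {x : lp (fun _ : ℕ => ℝ) 1 | x 0 = 0}
    ∧ {x : lp (fun _ : ℕ => ℝ) 1 | x 0 = 0 ∧ ∑' k : ℕ, x (k + 1) = 0}
        ⊂ {x : lp (fun _ : ℕ => ℝ) 1 | x 0 = 0}
    ∧ Metric.infDist ((lp.single 1 0 (1:ℝ) + lp.single 1 1 (1:ℝ)) : lp (fun _ : ℕ => ℝ) 1)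
        {x : lp (fun _ : ℕ => ℝ) 1 | x 0 = 0 ∧ ∑' k : ℕ, x (k + 1) = 0} = 2
    ∧ Metric.infDist ((lp.single 1 0 (1:ℝ) + lp.single 1 1 (1:ℝ)) : lp (fun _ : ℕ => ℝ) 1)
        {x : lp (fun _ : ℕ => ℝ) 1 | x 0 = 0} = 1 :=
  ⟨annihilator_preannihilator_tailSumZero, tailSumZero_ssubset, infDist_tailSumZero_eq_two,
    infDist_setOf_apply_zero_eq_one⟩
end
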